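/- arXiv:math/0304488 — 6 statements merged into one kernel-verified Lean document; each statement's English description precedes it below -/
import Mathlib

section
/- Let T be a contraction on a complex Banach space X such that the identity operator belongs to the strong closure of {Tⁿ : n ≥ 1}, i.e., for every finite set of vectors x₁, …, x_m ∈ X and every ε > 0 there exists an integer n ≥ 1 with ‖Tⁿxᵢ − xᵢ‖ ≤ ε for all i = 1, …, m. Then T is an isometry of X onto X (an invertible isometry). -/
/-- If `T` is a contraction on a complex Banach space `X` such that the
identity operator lies in the strong closure of `{T^n : n ≥ 1}`, then `T` is an invertible
isometry of `X`. -/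
theorem stmt2 {X : Type*} [NormedAddCommGroup X] [NormedSpace ℂ X] [CompleteSpace X]
    (T : X →L[ℂ] X) (hT : ‖T‖ ≤ 1)
    (h : ∀ (s : Finset X) (ε : ℝ), 0 < ε →
      ∃ n : ℕ, 1 ≤ n ∧ ∀ x ∈ s, ‖(T ^ n) x - x‖ ≤ ε) :
    (∀ x : X, ‖T x‖ = ‖x‖) ∧ Function.Surjective T := by
  have hpow : ∀ n : ℕ, ‖T ^ n‖ ≤ 1 := by
    intro n
    induction n with
    | zero => rw [pow_zero]; exact ContinuousLinearMap.norm_id_le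
    | succ k ih =>
      rw [pow_succ]
      calc ‖T ^ k * T‖ ≤ ‖T ^ k‖ * ‖T‖ := norm_mul_le _ _
      _ ≤ 1 * 1 := mul_le_mul ih hT (norm_nonneg _) zero_le_one
      _ = 1 := one_mul 1
  have hiso : ∀ x : X, ‖T x‖ = ‖x‖ := by
    intro x
    have h1 : ‖T x‖ ≤ ‖x‖ := by
      calc ‖T x‖ ≤ ‖T‖ * ‖x‖ := T.le_opNorm x
      _ ≤ 1 * ‖x‖ := by gcongr
      _ = ‖x‖ := one_mul _
    have h2 : ‖x‖ ≤ ‖T x‖ := by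
      refine le_of_forall_pos_le_add fun ε hε => ?_
      obtain ⟨n, hn1, hn⟩ := h {x} ε hε
      have hxn := hn x (Finset.mem_singleton_self x)
      have key : ‖(T ^ n) x‖ ≤ ‖T x‖ := by
        have : T ^ n = T ^ (n - 1) * T := by
          rw [← pow_succ, Nat.sub_add_cancel hn1]
        rw [this]
        calc ‖(T ^ (n - 1) * T) x‖ = ‖(T ^ (n - 1)) (T x)‖ := rfl
        _ ≤ ‖T ^ (n - 1)‖ * ‖T x‖ := (T ^ (n - 1)).le_opNorm _
        _ ≤ 1 * ‖T x‖ := by gcongr; exact hpow _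
        _ = ‖T x‖ := one_mul _
      calc ‖x‖ = ‖(T ^ n) x - ((T ^ n) x - x)‖ := by rw [sub_sub_cancel]
      _ ≤ ‖(T ^ n) x‖ + ‖(T ^ n) x - x‖ := norm_sub_le _ _
      _ ≤ ‖T x‖ + ε := add_le_add key hxn
    linarith
  refine ⟨hiso, ?_⟩
  have hIso : Isometry T := AddMonoidHomClass.isometry_of_norm T hiso
  have hclosed : IsClosed (Set.range T) := hIso.isClosedEmbedding.isClosed_range
  intro y
  have : y ∈ closure (Set.range T) := by
    rw [mem_closure_iff_seq_limit]
    have hseq : ∀ k : ℕ, ∃ z ∈ Set.range T, ‖z - y‖ ≤ 1 / (k + 1) := by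
      intro k
      obtain ⟨n, hn1, hn⟩ := h {y} (1 / (k + 1)) (by positivity)
      refine ⟨(T ^ n) y, ⟨(T ^ (n - 1)) y, ?_⟩, hn y (Finset.mem_singleton_self y)⟩
      have : T ^ n = T * T ^ (n - 1) := by
        rw [← pow_succ', Nat.sub_add_cancel hn1]
      rw [this]; rfl
    choose z hz hzle using hseq
    refine ⟨z, hz, ?_⟩
    rw [tendsto_iff_norm_sub_tendsto_zero]
    refine squeeze_zero (fun k => norm_nonneg _) hzle ?_
    exact tendsto_one_div_add_atTop_nhds_zero_nat
  rwa [hclosed.closure_eq] at this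
end

section
/- Let T be a contraction on a complex Banach space X and let M be the closed linear span of the set of all maximal eigenvectors of T. Then T maps M onto M and the restriction of T to M is an isometry; that is, T restricted to M is an invertible isometry of M. -/
open Filter

lemma recur_aux (s : Finset ℂ) (hs : ∀ c ∈ s, ‖c‖ = 1) {ε : ℝ} (hε : 0 < ε) :
    ∃ n : ℕ, 1 ≤ n ∧ ∀ c ∈ s, ‖c ^ n - 1‖ < ε := by
  set g : ℕ → (↥s → ℂ) := fun n c => (c : ℂ) ^ n with hg
  have hmem : ∀ n, g n ∈ Metric.closedBall (0 : ↥s → ℂ) 1 := by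
    intro n
    rw [Metric.mem_closedBall, dist_zero_right]
    refine pi_norm_le_iff_of_nonneg zero_le_one |>.2 fun c => ?_
    simp [hg, norm_pow, hs c c.2]
  obtain ⟨a, -, φ, hφ, htend⟩ := (isCompact_closedBall (0 : ↥s → ℂ) 1).tendsto_subseq hmem
  rw [Metric.tendsto_atTop] at htend
  obtain ⟨N, hN⟩ := htend (ε / 2) (by linarith)
  refine ⟨φ (N + 1) - φ N, ?_, fun c hc => ?_⟩
  · have : φ N < φ (N + 1) := hφ (by omega)
    omega
  · have h1 : dist (g (φ (N + 1))) (g (φ N)) < ε := by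
      calc dist (g (φ (N + 1))) (g (φ N)) ≤ dist ((g ∘ φ) (N + 1)) a + dist ((g ∘ φ) N) a :=
            dist_triangle_right _ _ _
        _ < ε / 2 + ε / 2 := add_lt_add (hN _ (Nat.le_succ N)) (hN _ le_rfl)
        _ = ε := by ring
    have hle : φ N ≤ φ (N + 1) := (hφ (Nat.lt_succ_self N)).le
    have key : ‖c ^ (φ (N + 1) - φ N) - 1‖ = ‖c ^ (φ (N + 1)) - c ^ (φ N)‖ := by
      have : c ^ (φ N) * (c ^ (φ (N + 1) - φ N) - 1) = c ^ (φ (N + 1)) - c ^ (φ N) := by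
        rw [mul_sub, mul_one, ← pow_add, Nat.add_sub_cancel' hle]
      rw [← this, norm_mul, norm_pow, hs c hc, one_pow, one_mul]
    rw [key]
    calc ‖c ^ (φ (N + 1)) - c ^ (φ N)‖ = ‖(g (φ (N+1)) - g (φ N)) (⟨c, hc⟩ : ↥s)‖ := by simp [hg]
      _ ≤ ‖g (φ (N+1)) - g (φ N)‖ := norm_le_pi_norm _ _
      _ = dist (g (φ (N + 1))) (g (φ N)) := (dist_eq_norm _ _).symm
      _ < ε := h1


lemma span_le {X : Type*} [NormedAddCommGroup X] [NormedSpace ℂ X]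
    (T : X →L[ℂ] X) (hT : ‖T‖ ≤ 1) {x : X}
    (hx : x ∈ Submodule.span ℂ {x : X | x ≠ 0 ∧ ∃ c : ℂ, ‖c‖ = 1 ∧ T x = c • x}) :
    ‖x‖ ≤ ‖T x‖ := by
  set E : Set X := {x : X | x ≠ 0 ∧ ∃ c : ℂ, ‖c‖ = 1 ∧ T x = c • x} with hE
  obtain ⟨l, hl⟩ := (Finsupp.mem_span_iff_linearCombination ℂ E x).1 hx
  choose cval hcnorm hceig using fun v : ↥E => v.2.2
  have hcontr : ∀ y : X, ‖T y‖ ≤ ‖y‖ := fun y =>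
    (T.le_opNorm y).trans (by nlinarith [norm_nonneg y])
  have hpow_le : ∀ (n : ℕ) (y : X), ‖(T ^ n) y‖ ≤ ‖y‖ := by
    intro n
    induction n with
    | zero => intro y; simp
    | succ k ih =>
        intro y
        rw [pow_succ', ContinuousLinearMap.mul_apply]
        exact (hcontr _).trans (ih y)
  have hTn_eig : ∀ (n : ℕ) (v : ↥E), (T ^ n) (v : X) = (cval v) ^ n • (v : X) := by
    intro n v
    induction n with
    | zero => simp
    | succ k ih =>
        rw [pow_succ', ContinuousLinearMap.mul_apply, ih, map_smul, hceig, smul_smul,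
          pow_succ', mul_comm]
  have hx_eq : x = ∑ v ∈ l.support, l v • (v : X) := by
    rw [← hl, Finsupp.linearCombination_apply, Finsupp.sum]
  set C : ℝ := ∑ v ∈ l.support, ‖l v‖ * ‖(v : X)‖ with hC
  have hC0 : 0 ≤ C := Finset.sum_nonneg fun v _ => by positivity
  refine le_of_forall_pos_le_add fun ε hε => ?_
  have hεC : 0 < ε / (C + 1) := by positivity
  obtain ⟨n, hn1, hn⟩ := recur_aux (l.support.image cval)
    (fun c hc => by obtain ⟨v, -, rfl⟩ := Finset.mem_image.1 hc; exact hcnorm v) hεC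
  have hTnx : (T ^ n) x = ∑ v ∈ l.support, ((cval v) ^ n * l v) • (v : X) := by
    rw [hx_eq, map_sum]
    refine Finset.sum_congr rfl fun v _ => ?_
    rw [map_smul, hTn_eig, smul_smul, mul_comm]
  have hdiff : ‖(T ^ n) x - x‖ ≤ ε := by
    have : (T ^ n) x - x = ∑ v ∈ l.support, (((cval v) ^ n - 1) * l v) • (v : X) := by
      rw [hTnx, hx_eq, ← Finset.sum_sub_distrib]
      refine Finset.sum_congr rfl fun v _ => ?_
      rw [← sub_smul, sub_mul, one_mul]
    rw [this]
    calc ‖∑ v ∈ l.support, (((cval v) ^ n - 1) * l v) • (v : X)‖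
        ≤ ∑ v ∈ l.support, ‖(((cval v) ^ n - 1) * l v) • (v : X)‖ := norm_sum_le _ _
      _ ≤ ∑ v ∈ l.support, (ε / (C + 1)) * (‖l v‖ * ‖(v : X)‖) := by
          refine Finset.sum_le_sum fun v hv => ?_
          rw [norm_smul, norm_mul]
          have h1 : ‖(cval v) ^ n - 1‖ ≤ ε / (C + 1) :=
            (hn _ (Finset.mem_image_of_mem cval hv)).le
          rw [mul_assoc]
          exact mul_le_mul_of_nonneg_right h1 (by positivity)
      _ = (ε / (C + 1)) * C := by rw [← Finset.mul_sum]
      _ ≤ ε := by rw [div_mul_eq_mul_div]; rw [div_le_iff₀ (by linarith)]; nlinarith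
  have hmid : ‖(T ^ n) x‖ ≤ ‖T x‖ := by
    obtain ⟨k, rfl⟩ := Nat.exists_eq_add_of_le hn1
    rw [add_comm, pow_succ, ContinuousLinearMap.mul_apply]
    exact hpow_le k (T x)
  calc ‖x‖ ≤ ‖(T ^ n) x‖ + ‖x - (T ^ n) x‖ := norm_le_insert' _ _
    _ ≤ ‖T x‖ + ε := add_le_add hmid (by rwa [norm_sub_rev])


/-- Let `T` be a contraction on a complex Banach space `X` and let `M` be the
closed linear span of the maximal eigenvectors of `T` (nonzero `x` with `T x = c • x`,
`‖c‖ = 1`).  Then `T` maps `M` onto `M` and restricts to an isometry on `M`. -/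
theorem stmt4 {X : Type*} [NormedAddCommGroup X] [NormedSpace ℂ X] [CompleteSpace X]
    (T : X →L[ℂ] X) (hT : ‖T‖ ≤ 1)
    (M : Submodule ℂ X)
    (hM : M = (Submodule.span ℂ
      {x : X | x ≠ 0 ∧ ∃ c : ℂ, ‖c‖ = 1 ∧ T x = c • x}).topologicalClosure) :
    (∀ x ∈ M, T x ∈ M) ∧ (∀ x ∈ M, ‖T x‖ = ‖x‖) ∧ (∀ y ∈ M, ∃ x ∈ M, T x = y) := by
  set E : Set X := {x : X | x ≠ 0 ∧ ∃ c : ℂ, ‖c‖ = 1 ∧ T x = c • x} with hE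
  set S : Submodule ℂ X := Submodule.span ℂ E with hS
  have hcontr : ∀ y : X, ‖T y‖ ≤ ‖y‖ := fun y =>
    (T.le_opNorm y).trans (by nlinarith [norm_nonneg y])
  -- T maps S into S
  have hTS : ∀ z ∈ S, T z ∈ S := by
    intro z hz
    induction hz using Submodule.span_induction with
    | mem v hv =>
        obtain ⟨-, c, -, hc⟩ := id hv
        rw [hc]
        exact S.smul_mem c (Submodule.subset_span hv)
    | zero => simp
    | add a b _ _ ha hb => rw [map_add]; exact S.add_mem ha hb
    | smul a z _ hz => rw [map_smul]; exact S.smul_mem a hz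
  -- isometry on S
  have hisoS : ∀ z ∈ S, ‖T z‖ = ‖z‖ := fun z hz =>
    le_antisymm (hcontr z) (span_le T hT hz)
  -- isometry on M
  have hMco : (M : Set X) = closure (S : Set X) := by rw [hM]; rfl
  have hisoM : ∀ x ∈ M, ‖T x‖ = ‖x‖ := by
    have hclosed : IsClosed {x : X | ‖T x‖ = ‖x‖} :=
      isClosed_eq (T.continuous.norm) continuous_norm
    intro x hx
    have : (M : Set X) ⊆ {x : X | ‖T x‖ = ‖x‖} := by
      rw [hMco]
      exact hclosed.closure_subset_iff.2 fun z hz => hisoS z hz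
    exact this hx
  -- T maps M into M
  have hTM : ∀ x ∈ M, T x ∈ M := by
    intro x hx
    have h1 : Set.MapsTo T (S : Set X) (S : Set X) := hTS
    have h2 := h1.closure T.continuous
    rw [← hMco] at h2
    exact h2 hx
  refine ⟨hTM, hisoM, ?_⟩
  -- surjectivity
  have hMclosed : IsClosed (M : Set X) := by
    rw [hM]; exact Submodule.isClosed_topologicalClosure S
  haveI : CompleteSpace ↥M := hMclosed.completeSpace_coe
  set f : ↥M → X := fun m => T m with hf
  have hfiso : Isometry f := by
    refine Isometry.of_dist_eq fun a b => ?_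
    have hab : ((a : X) - b) ∈ M := M.sub_mem a.2 b.2
    simp only [hf, dist_eq_norm, ← map_sub]
    rw [hisoM _ hab]
    rfl
  have hrange : IsClosed (Set.range f) := hfiso.isClosedEmbedding.isClosed_range
  have hSsub : (S : Set X) ⊆ Set.range f := by
    intro z hz
    have : ∃ w ∈ M, T w = z := by
      induction hz using Submodule.span_induction with
      | mem v hv =>
          obtain ⟨-, c, hc1, hc⟩ := id hv
          have hc0 : c ≠ 0 := by
            intro h; rw [h] at hc1; simp at hc1
          refine ⟨c⁻¹ • v, ?_, ?_⟩
          · have : v ∈ M := by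
              rw [hM]
              exact Submodule.le_topologicalClosure S (Submodule.subset_span hv)
            exact M.smul_mem _ this
          · rw [map_smul, hc, smul_smul, inv_mul_cancel₀ hc0, one_smul]
      | zero => exact ⟨0, M.zero_mem, map_zero T⟩
      | add a b _ _ ha hb =>
          obtain ⟨w1, hw1, hw1'⟩ := ha
          obtain ⟨w2, hw2, hw2'⟩ := hb
          exact ⟨w1 + w2, M.add_mem hw1 hw2, by rw [map_add, hw1', hw2']⟩
      | smul a z _ hz =>
          obtain ⟨w, hw, hw'⟩ := hz
          exact ⟨a • w, M.smul_mem a hw, by rw [map_smul, hw']⟩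
    obtain ⟨w, hw, hw'⟩ := this
    exact ⟨⟨w, hw⟩, hw'⟩
  have hMsub : (M : Set X) ⊆ Set.range f := by
    rw [hMco]
    exact hrange.closure_subset_iff.2 hSsub
  intro y hy
  obtain ⟨m, hm⟩ := hMsub hy
  exact ⟨m, m.2, hm⟩
end

section
/- Let T be a contraction on a complex Banach space X, let x ∈ X, and suppose z ∈ X is such that there is a strictly increasing sequence of positive integers m₁ < m₂ < ⋯ with ‖T^{m_k}x − z‖ → 0 as k → ∞. Then there exists a strictly increasing sequence of positive integers n₁ < n₂ < ⋯ such that ‖T^{n_k}z − z‖ → 0 as k → ∞. -/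
/-- If `T` is a contraction on a complex Banach space, `x, z ∈ X`, and some
subsequence `T^{m_k} x` converges in norm to `z`, then there is a strictly increasing sequence
of positive integers `n_k` with `‖T^{n_k} z - z‖ → 0`. -/
theorem stmt5 {X : Type*} [NormedAddCommGroup X] [NormedSpace ℂ X] [CompleteSpace X]
    (T : X →L[ℂ] X) (hT : ‖T‖ ≤ 1) (x z : X)
    (m : ℕ → ℕ) (hm : StrictMono m) (hm1 : ∀ k, 1 ≤ m k)
    (hconv : Filter.Tendsto (fun k => ‖(T ^ m k) x - z‖) Filter.atTop (nhds 0)) :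
    ∃ n : ℕ → ℕ, StrictMono n ∧ (∀ k, 1 ≤ n k) ∧
      Filter.Tendsto (fun k => ‖(T ^ n k) z - z‖) Filter.atTop (nhds 0) := by
  -- powers of T are contractions
  have hTpow : ∀ (d : ℕ) (y : X), ‖(T ^ d) y‖ ≤ ‖y‖ := by
    intro d
    induction d with
    | zero => intro y; simp
    | succ d ih =>
      intro y
      rw [pow_succ, ContinuousLinearMap.mul_apply]
      calc ‖(T ^ d) (T y)‖ ≤ ‖T y‖ := ih _
      _ ≤ ‖T‖ * ‖y‖ := T.le_opNorm y
      _ ≤ 1 * ‖y‖ := by gcongr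
      _ = ‖y‖ := one_mul _
  -- key estimate
  have key : ∀ p q : ℕ, p < q →
      ‖(T ^ (m q - m p)) z - z‖ ≤ ‖(T ^ m p) x - z‖ + ‖(T ^ m q) x - z‖ := by
    intro p q hpq
    have hle : m p ≤ m q := (hm hpq).le
    have hcomp : (T ^ (m q - m p)) ((T ^ m p) x) = (T ^ m q) x := by
      rw [← ContinuousLinearMap.mul_apply, ← pow_add, Nat.sub_add_cancel hle]
    calc ‖(T ^ (m q - m p)) z - z‖
        ≤ ‖(T ^ (m q - m p)) z - (T ^ (m q - m p)) ((T ^ m p) x)‖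
          + ‖(T ^ (m q - m p)) ((T ^ m p) x) - z‖ := norm_sub_le_norm_sub_add_norm_sub _ _ _
      _ = ‖(T ^ (m q - m p)) (z - (T ^ m p) x)‖ + ‖(T ^ m q) x - z‖ := by
          rw [← map_sub, hcomp]
      _ ≤ ‖z - (T ^ m p) x‖ + ‖(T ^ m q) x - z‖ := by gcongr; exact hTpow _ _
      _ = ‖(T ^ m p) x - z‖ + ‖(T ^ m q) x - z‖ := by rw [norm_sub_rev]
  -- define q recursively
  let q : ℕ → ℕ := fun k => Nat.rec 1 (fun k qk => (k + 1) + (m qk - m k) + 1) k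
  have hq0 : q 0 = 1 := rfl
  have hqs : ∀ k, q (k + 1) = (k + 1) + (m (q k) - m k) + 1 := fun k => rfl
  have hqk : ∀ k, k < q k := by
    intro k
    cases k with
    | zero => simp [hq0]
    | succ k => rw [hqs]; omega
  have step : ∀ a k : ℕ, m a + k ≤ m (a + k) := by
    intro a k
    induction k with
    | zero => simp
    | succ k ih =>
      have := hm (Nat.lt_succ_self (a + k))
      have h : a + (k + 1) = (a + k) + 1 := by omega
      simp only [Nat.succ_eq_add_one] at this
      rw [h]; omega
  have hgap : ∀ a b : ℕ, a ≤ b → b - a ≤ m b - m a := by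
    intro a b hab
    have := step a (b - a)
    rw [Nat.add_sub_cancel' hab] at this
    omega
  have hn1 : ∀ k, 1 ≤ m (q k) - m k := by
    intro k
    have h1 := hgap k (q k) (hqk k).le
    have h2 := hqk k
    omega
  have hnmono : StrictMono (fun k => m (q k) - m k) := by
    apply strictMono_nat_of_lt_succ
    intro k
    have h1 : k + 1 ≤ q (k + 1) := (hqk (k + 1)).le
    have h2 := hgap (k + 1) (q (k + 1)) h1
    have h3 : q (k + 1) = (k + 1) + (m (q k) - m k) + 1 := hqs k
    show m (q k) - m k < m (q (k + 1)) - m (k + 1)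
    omega
  refine ⟨fun k => m (q k) - m k, hnmono, hn1, ?_⟩
  have hqtop : Filter.Tendsto q Filter.atTop Filter.atTop :=
    Filter.tendsto_atTop_mono (fun k => (hqk k).le) Filter.tendsto_id
  have hbound : Filter.Tendsto (fun k => ‖(T ^ m k) x - z‖ + ‖(T ^ m (q k)) x - z‖)
      Filter.atTop (nhds 0) := by
    have h2 : Filter.Tendsto (fun k => ‖(T ^ m (q k)) x - z‖) Filter.atTop (nhds 0) :=
      hconv.comp hqtop
    simpa using hconv.add h2
  apply squeeze_zero (fun k => norm_nonneg _) (fun k => ?_) hbound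
  exact key k (q k) (hqk k)
end

section
/- For every locally finite contraction T acting on a complex Banach space X there exists a quasiautomorphism S on X such that ‖Tⁿx − Sⁿx‖ → 0 as n → ∞, for every x ∈ X. -/
open Filter Topology

attribute [local instance] Ultrafilter.add Ultrafilter.addSemigroup

/-- Every finite sum from a stream of positive naturals is positive. -/
lemma fs_pos {a : Stream' ℕ} {m : ℕ} (hm : m ∈ Hindman.FS a) :
    (∀ n, 0 < a.get n) → 0 < m := by
  induction hm with
  | head' a => intro h; exact h 0
  | tail' a m h ih => intro hpos; exact ih fun n => hpos (n + 1)
  | cons' a m h ih =>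
      intro hpos
      have := ih fun n => hpos (n + 1)
      have := hpos 0
      omega

/-- There is an idempotent ultrafilter on `ℕ` which is finer than `atTop`. -/
lemma exists_idempotent_ultrafilter_atTop :
    ∃ U : Ultrafilter ℕ, U + U = U ∧ (U : Filter ℕ) ≤ atTop := by
  obtain ⟨U, hUidem, hUFS⟩ :=
    Hindman.exists_idempotent_ultrafilter_le_FS (Stream'.const 1 : Stream' ℕ)
  refine ⟨U, hUidem, ?_⟩
  have hU1 : ∀ᶠ m in (U : Filter ℕ), 1 ≤ m := by
    filter_upwards [hUFS] with m hm
    exact fs_pos hm fun n => by simp [Stream'.get_const]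
  have hUk : ∀ k : ℕ, ∀ᶠ m in (U : Filter ℕ), k ≤ m := by
    intro k
    induction k with
    | zero => exact Eventually.of_forall fun m => Nat.zero_le m
    | succ k ih =>
        have h2 : ∀ᶠ m in ((U + U : Ultrafilter ℕ) : Filter ℕ), k + 1 ≤ m := by
          rw [Ultrafilter.eventually_add]
          filter_upwards [ih] with m hm
          filter_upwards [hU1] with m' hm'
          omega
        rwa [hUidem] at h2
  have : Tendsto (id : ℕ → ℕ) (U : Filter ℕ) atTop := tendsto_atTop.mpr hUk
  exact tendsto_id'.mp this

/-- A quasiautomorphism of a Banach space `X`: a contraction whose range is closed and whose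
restriction to its range is an isometric linear bijection of the range onto itself. -/
def IsQuasiautomorphism {X : Type*} [NormedAddCommGroup X] [NormedSpace ℂ X]
    (S : X →L[ℂ] X) : Prop :=
  ‖S‖ ≤ 1 ∧ IsClosed (Set.range S) ∧ (∀ y ∈ Set.range S, ‖S y‖ = ‖y‖) ∧
    S '' Set.range S = Set.range S

/-- For every locally finite contraction `T` on a complex Banach space `X`
there is a quasiautomorphism `S` with `‖T^n x - S^n x‖ → 0` for every `x ∈ X`. -/
theorem stmt8 {X : Type*} [NormedAddCommGroup X] [NormedSpace ℂ X] [CompleteSpace X]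
    (T : X →L[ℂ] X) (hT : ‖T‖ ≤ 1)
    (hlf : ∀ y : X, IsCompact (closure (Set.range fun n : ℕ => (T ^ n) y))) :
    ∃ S : X →L[ℂ] X, IsQuasiautomorphism S ∧
      ∀ x : X, Filter.Tendsto (fun n : ℕ => ‖(T ^ n) x - (S ^ n) x‖) Filter.atTop (nhds 0) := by
  classical
  -- powers of T are contractions
  have hT1 : ∀ x : X, ‖T x‖ ≤ ‖x‖ := fun x =>
    (T.le_opNorm x).trans (by
      calc ‖T‖ * ‖x‖ ≤ 1 * ‖x‖ := mul_le_mul_of_nonneg_right hT (norm_nonneg x)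
        _ = ‖x‖ := one_mul _)
  have hTn : ∀ (n : ℕ) (x : X), ‖(T ^ n) x‖ ≤ ‖x‖ := by
    intro n
    induction n with
    | zero => intro x; simp
    | succ n ih =>
        intro x
        rw [pow_succ, ContinuousLinearMap.mul_apply]
        exact (ih (T x)).trans (hT1 x)
  have hcomm : ∀ (n : ℕ) (x : X), (T ^ n) (T x) = T ((T ^ n) x) := by
    intro n x
    rw [← ContinuousLinearMap.mul_apply, ← pow_succ, pow_succ', ContinuousLinearMap.mul_apply]
  -- the idempotent ultrafilter
  obtain ⟨U, hUidem, hUtop⟩ := exists_idempotent_ultrafilter_atTop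
  -- ultrafilter limits of orbits
  have hconv : ∀ x : X, ∃ y : X, Tendsto (fun n => (T ^ n) x) (U : Filter ℕ) (𝓝 y) := by
    intro x
    have hle : (U.map fun n => (T ^ n) x : Filter X) ≤
        𝓟 (closure (Set.range fun n : ℕ => (T ^ n) x)) := by
      rw [Ultrafilter.coe_map, le_principal_iff, mem_map]
      exact Eventually.of_forall fun n => subset_closure ⟨n, rfl⟩
    obtain ⟨y, -, hy⟩ := (hlf x).ultrafilter_le_nhds _ hle
    exact ⟨y, by rwa [Ultrafilter.coe_map] at hy⟩
  choose p hp using hconv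
  -- linearity and boundedness of p
  have hadd : ∀ x y : X, p (x + y) = p x + p y := fun x y =>
    tendsto_nhds_unique (hp (x + y)) (by simpa only [map_add] using (hp x).add (hp y))
  have hsmul : ∀ (c : ℂ) (x : X), p (c • x) = c • p x := fun c x =>
    tendsto_nhds_unique (hp (c • x)) (by simpa only [map_smul] using (hp x).const_smul c)
  have hle : ∀ x : X, ‖p x‖ ≤ ‖x‖ := fun x =>
    le_of_tendsto (hp x).norm (Eventually.of_forall fun n => hTn n x)
  set P : X →L[ℂ] X :=
    LinearMap.mkContinuous
      { toFun := p, map_add' := hadd, map_smul' := hsmul } 1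
      (fun x => by simpa using hle x) with hPdef
  have hPapp : ∀ x : X, P x = p x := fun _ => rfl
  -- the limit of the norms along atTop
  have hmono : ∀ x : X, Antitone fun n => ‖(T ^ n) x‖ := by
    intro x
    refine antitone_nat_of_succ_le fun n => ?_
    rw [pow_succ', ContinuousLinearMap.mul_apply]
    exact hT1 _
  have hclim : ∀ x : X, Tendsto (fun n => ‖(T ^ n) x‖) atTop (𝓝 (⨅ n, ‖(T ^ n) x‖)) := by
    intro x
    refine tendsto_atTop_ciInf (hmono x) ⟨0, ?_⟩
    rintro r ⟨n, rfl⟩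
    exact norm_nonneg _
  have hnormP : ∀ x : X, ‖p x‖ = ⨅ n, ‖(T ^ n) x‖ := fun x =>
    tendsto_nhds_unique (hp x).norm ((hclim x).mono_left hUtop)
  -- T is isometric on the range of p
  have hTnorm : ∀ x : X, ‖T (p x)‖ = ‖p x‖ := by
    intro x
    have h1 : Tendsto (fun n => ‖(T ^ (n + 1)) x‖) (U : Filter ℕ) (𝓝 ‖T (p x)‖) := by
      have h2 : Tendsto (fun n => T ((T ^ n) x)) (U : Filter ℕ) (𝓝 (T (p x))) :=
        (T.continuous.tendsto _).comp (hp x)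
      refine h2.norm.congr fun n => ?_
      rw [pow_succ, ContinuousLinearMap.mul_apply, hcomm]
    have h4 : Tendsto (fun n => ‖(T ^ (n + 1)) x‖) (U : Filter ℕ) (𝓝 (⨅ n, ‖(T ^ n) x‖)) :=
      ((hclim x).comp (tendsto_add_atTop_nat 1)).mono_left hUtop
    rw [tendsto_nhds_unique h1 h4, hnormP]
  -- p commutes with T
  have hPT : ∀ x : X, p (T x) = T (p x) := by
    intro x
    refine tendsto_nhds_unique (hp (T x)) ?_
    have h2 : Tendsto (fun n => T ((T ^ n) x)) (U : Filter ℕ) (𝓝 (T (p x))) :=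
      (T.continuous.tendsto _).comp (hp x)
    have h3 : (fun n => (T ^ n) (T x)) = fun n => T ((T ^ n) x) := by
      funext n; rw [hcomm]
    rwa [h3]
  have hPTn : ∀ (n : ℕ) (x : X), p ((T ^ n) x) = (T ^ n) (p x) := by
    intro n
    induction n with
    | zero => intro x; simp
    | succ n ih =>
        intro x
        rw [pow_succ, ContinuousLinearMap.mul_apply, ih (T x), hPT]
        rw [← ContinuousLinearMap.mul_apply, ← pow_succ, pow_succ', ContinuousLinearMap.mul_apply]
  -- p is idempotent (uses idempotence of U)
  have hkey : ∀ x : X, Tendsto (fun n => (T ^ n) x) (U : Filter ℕ) (𝓝 (p (p x))) := by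
    intro x
    rw [Metric.tendsto_nhds]
    intro ε hε
    have h2 : ∀ᶠ q in ((U + U : Ultrafilter ℕ) : Filter ℕ), dist ((T ^ q) x) (p (p x)) < ε := by
      rw [Ultrafilter.eventually_add]
      have h1 : ∀ᶠ m in (U : Filter ℕ), dist ((T ^ m) (p x)) (p (p x)) < ε / 2 :=
        Metric.tendsto_nhds.mp (hp (p x)) _ (by positivity)
      filter_upwards [h1] with m hm
      have h3 : Tendsto (fun n => (T ^ m) ((T ^ n) x)) (U : Filter ℕ) (𝓝 ((T ^ m) (p x))) :=
        ((T ^ m).continuous.tendsto _).comp (hp x)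
      have h4 : ∀ᶠ n in (U : Filter ℕ), dist ((T ^ m) ((T ^ n) x)) ((T ^ m) (p x)) < ε / 2 :=
        Metric.tendsto_nhds.mp h3 _ (by positivity)
      filter_upwards [h4] with n hn
      have h5 : (T ^ (m + n)) x = (T ^ m) ((T ^ n) x) := by
        rw [pow_add, ContinuousLinearMap.mul_apply]
      rw [h5]
      calc dist ((T ^ m) ((T ^ n) x)) (p (p x))
          ≤ dist ((T ^ m) ((T ^ n) x)) ((T ^ m) (p x)) + dist ((T ^ m) (p x)) (p (p x)) :=
            dist_triangle _ _ _
        _ < ε / 2 + ε / 2 := by linarith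
        _ = ε := by ring
    rwa [hUidem] at h2
  have hPP : ∀ x : X, p (p x) = p x := fun x => tendsto_nhds_unique (hkey x) (hp x)
  -- define S
  refine ⟨T.comp P, ?_, ?_⟩
  · -- quasiautomorphism
    have hSapp : ∀ x : X, (T.comp P) x = T (p x) := fun _ => rfl
    -- range of S equals range of P, which is the set of fixed points of P
    have hfix : Set.range (T.comp P) = {z : X | p z = z} := by
      apply Set.Subset.antisymm
      · rintro _ ⟨x, rfl⟩
        show p ((T.comp P) x) = (T.comp P) x
        rw [hSapp, ← hPT, hPP, hPT]
      · rintro z hz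
        have hz' : p z = z := hz
        -- z is in the closure of {T^n z : n ≥ 1} ⊆ T '' K, K the compact orbit closure
        set K := closure (Set.range fun n : ℕ => (T ^ n) z) with hK
        have hKcomp : IsCompact K := hlf z
        have hTK : IsClosed (T '' K) := (hKcomp.image T.continuous).isClosed
        have hmem : z ∈ T '' K := by
          have h1 : ∀ᶠ n in (U : Filter ℕ), (T ^ n) z ∈ T '' K := by
            have h2 : ∀ᶠ n in (U : Filter ℕ), 1 ≤ n := hUtop (eventually_ge_atTop 1)
            filter_upwards [h2] with n hn
            obtain ⟨k, rfl⟩ := Nat.exists_eq_add_of_le' hn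
            refine ⟨(T ^ k) z, subset_closure ⟨k, rfl⟩, ?_⟩
            rw [pow_succ', ContinuousLinearMap.mul_apply]
          have h3 : Tendsto (fun n => (T ^ n) z) (U : Filter ℕ) (𝓝 z) := by
            have h3' := hp z; rwa [hz'] at h3' 
          have := mem_closure_of_tendsto h3 h1
          rwa [hTK.closure_eq] at this
        obtain ⟨w, hwK, hwz⟩ := hmem
        -- w is a fixed point of p
        have hKfix : K ⊆ {z : X | p z = z} := by
          apply closure_minimal
          · rintro _ ⟨n, rfl⟩
            show p ((T ^ n) z) = (T ^ n) z
            rw [hPTn, hz']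
          · have : IsClosed {z : X | P z = z} :=
              isClosed_eq P.continuous continuous_id
            simpa [hPapp] using this
        have hw : p w = w := hKfix hwK
        exact ⟨w, by rw [hSapp, hw, hwz]⟩
    refine ⟨?_, ?_, ?_, ?_⟩
    · -- norm bound
      refine ContinuousLinearMap.opNorm_le_bound _ zero_le_one fun x => ?_
      rw [hSapp, one_mul]
      calc ‖T (p x)‖ = ‖p x‖ := hTnorm x
        _ ≤ ‖x‖ := hle x
    · -- closed range
      rw [hfix]
      have : IsClosed {z : X | P z = z} := isClosed_eq P.continuous continuous_id
      simpa [hPapp] using this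
    · -- isometric on range
      intro y hy
      rw [hfix] at hy
      have hy' : p y = y := hy
      calc ‖(T.comp P) y‖ = ‖T (p y)‖ := by rw [hSapp]
        _ = ‖p y‖ := hTnorm y
        _ = ‖y‖ := by rw [hy']
    · -- restriction to range is onto the range
      apply Set.Subset.antisymm
      · rintro _ ⟨y, -, rfl⟩
        exact ⟨y, rfl⟩
      · rintro _ ⟨x, rfl⟩
        refine ⟨P x, ?_, ?_⟩
        · rw [hfix]; exact hPP x
        · rw [hSapp, hSapp, hPapp, hPP]
  · -- convergence
    intro x
    have h0 : p (x - p x) = 0 := by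
      have h := hsmul (-1) (p x)
      have h2 := hadd x ((-1 : ℂ) • p x)
      rw [h] at h2
      have e : x - p x = x + (-1 : ℂ) • p x := by
        rw [neg_one_smul, ← sub_eq_add_neg]
      rw [e, h2, hPP, neg_one_smul, ← sub_eq_add_neg, sub_self]
    have h1 : Tendsto (fun n => ‖(T ^ n) (x - p x)‖) atTop (𝓝 0) := by
      have h2 := hclim (x - p x)
      have h3 : (⨅ n, ‖(T ^ n) (x - p x)‖) = 0 := by
        rw [← hnormP, h0, norm_zero]
      rwa [h3] at h2
    refine h1.congr' ?_
    filter_upwards [eventually_ge_atTop 1] with n hn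
    obtain ⟨k, rfl⟩ := Nat.exists_eq_add_of_le' hn
    -- (S)^(1+k) x = T^(1+k) (p x)
    have hSpow : ∀ (k : ℕ) (x : X), ((T.comp P) ^ (k + 1)) x = (T ^ (k + 1)) (p x) := by
      intro k
      induction k with
      | zero => intro x; simp [hPapp]
      | succ k ih =>
          intro x
          rw [pow_succ, ContinuousLinearMap.mul_apply, ih]
          have : p ((T.comp P) x) = T (p x) := by
            show p (T (P x)) = T (p x)
            rw [hPapp, hPT, hPP]
          rw [this, hcomm, ← ContinuousLinearMap.mul_apply, ← pow_succ']
    rw [hSpow k x, ← map_sub (T ^ (k + 1))]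
end

section
/- Let A be a C*-algebra and P : A → A a completely positive contraction. Suppose (B, β) and (B̃, β̃) are C*-dynamical systems, θ : A → B, θ⁎ : B → A, θ̃ : A → B̃, θ̃⁎ : B̃ → A are completely positive contractions satisfying θ∘θ⁎ = id_B, θ̃∘θ̃⁎ = id_{B̃}, and P = θ⁎∘β∘θ = θ̃⁎∘β̃∘θ̃. Then the map φ = θ̃∘θ⁎ : B → B̃ is a *-isomorphism of B onto B̃ with inverse θ∘θ̃⁎, and it satisfies φ∘β = β̃∘φ; in particular the C*-dynamical systems (B, β) and (B̃, β̃) are conjugate. -/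
/-- A linear map between C⋆-algebras is completely positive if, for every `k`, the induced map
on `k × k` matrices carries positive matrices (those of the form `Nᴴ * N`) to positive
matrices. -/
def IsCompletelyPositive {A B : Type*} [CStarAlgebra A] [CStarAlgebra B] (φ : A → B) : Prop :=
  ∀ (k : ℕ) (N : Matrix (Fin k) (Fin k) A),
    ∃ L : Matrix (Fin k) (Fin k) B, (N.conjTranspose * N).map φ = L.conjTranspose * L

section Aux

variable {B B' : Type*} [CStarAlgebra B] [CStarAlgebra B']
  [PartialOrder B] [StarOrderedRing B] [PartialOrder B'] [StarOrderedRing B']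

lemma cp_exists_factor (φ : B →L[ℂ] B') (hcp : IsCompletelyPositive ⇑φ) {a : B} (ha : 0 ≤ a) :
    ∃ l : B', φ a = star l * l := by
  obtain ⟨L, hL⟩ := hcp 1 (Matrix.of fun _ _ => CFC.sqrt a)
  refine ⟨L 0 0, ?_⟩
  have h := Matrix.ext_iff.mpr hL 0 0
  simp only [Matrix.map_apply, Matrix.mul_apply, Matrix.conjTranspose_apply, Fin.sum_univ_one,
    Matrix.of_apply] at h
  rwa [(IsSelfAdjoint.of_nonneg (CFC.sqrt_nonneg _)).star_eq, CFC.sqrt_mul_sqrt_self a ha] at h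

lemma cp_nonneg (φ : B →L[ℂ] B') (hcp : IsCompletelyPositive ⇑φ) {a : B} (ha : 0 ≤ a) :
    0 ≤ φ a := by
  obtain ⟨l, hl⟩ := cp_exists_factor φ hcp ha
  rw [hl]; exact star_mul_self_nonneg l

lemma cp_isSelfAdjoint (φ : B →L[ℂ] B') (hcp : IsCompletelyPositive ⇑φ) {h : B}
    (hh : IsSelfAdjoint h) : IsSelfAdjoint (φ h) := by
  have hu0 : 0 ≤ algebraMap ℝ B ‖h‖ + h := by
    rw [← sub_neg_eq_add, sub_nonneg]
    exact neg_le_of_neg_le (by simpa using hh.neg_algebraMap_norm_le_self)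
  have hv0 : 0 ≤ algebraMap ℝ B ‖h‖ - h := by
    rw [sub_nonneg]; exact hh.le_algebraMap_norm_self
  have hsu : IsSelfAdjoint (φ (algebraMap ℝ B ‖h‖ + h)) := .of_nonneg (cp_nonneg φ hcp hu0)
  have hsv : IsSelfAdjoint (φ (algebraMap ℝ B ‖h‖ - h)) := .of_nonneg (cp_nonneg φ hcp hv0)
  have key : φ h = (2:ℂ)⁻¹ • (φ (algebraMap ℝ B ‖h‖ + h) - φ (algebraMap ℝ B ‖h‖ - h)) := by
    rw [← map_sub]
    have h2 : (algebraMap ℝ B ‖h‖ + h) - (algebraMap ℝ B ‖h‖ - h) = (2:ℂ) • h := by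
      rw [two_smul]; abel
    rw [h2, map_smul, smul_smul]
    norm_num
  rw [key]
  refine IsSelfAdjoint.smul ?_ (hsu.sub hsv)
  simp [IsSelfAdjoint]
lemma cp_star (φ : B →L[ℂ] B') (hcp : IsCompletelyPositive ⇑φ) (x : B) :
    φ (star x) = star (φ x) := by
  have hh : IsSelfAdjoint ((2:ℂ)⁻¹ • (x + star x)) := by
    rw [IsSelfAdjoint, star_smul, star_add, star_star, add_comm]
    congr 1
    simp
  have hc : star ((2:ℂ)⁻¹ * Complex.I) = -((2:ℂ)⁻¹ * Complex.I) := by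
    simp [Complex.ext_iff]
  have hk : IsSelfAdjoint (((2:ℂ)⁻¹ * Complex.I) • (star x - x)) := by
    rw [IsSelfAdjoint, star_smul, star_sub, star_star, hc, neg_smul, ← smul_neg, neg_sub]
  have hc2 : Complex.I * ((2:ℂ)⁻¹ * Complex.I) = -(2:ℂ)⁻¹ := by
    rw [mul_comm ((2:ℂ)⁻¹), ← mul_assoc, Complex.I_mul_I]; ring
  have hxstar : star x = (2:ℂ)⁻¹ • (x + star x)
      - Complex.I • (((2:ℂ)⁻¹ * Complex.I) • (star x - x)) := by
    rw [smul_smul, hc2]; module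
  have hdecomp : x = (2:ℂ)⁻¹ • (x + star x)
      + Complex.I • (((2:ℂ)⁻¹ * Complex.I) • (star x - x)) := by
    rw [smul_smul, hc2]; module
  have s1 : IsSelfAdjoint (φ ((2:ℂ)⁻¹ • (x + star x))) := cp_isSelfAdjoint φ hcp hh
  have s2 : IsSelfAdjoint (φ (((2:ℂ)⁻¹ * Complex.I) • (star x - x))) := cp_isSelfAdjoint φ hcp hk
  conv_lhs => rw [hxstar]
  conv_rhs => rw [hdecomp]
  rw [map_sub, map_add, star_add, s1.star_eq,
    map_smul φ Complex.I (((2:ℂ)⁻¹ * Complex.I) • (star x - x)), star_smul, s2.star_eq,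
    Complex.star_def, Complex.conj_I, neg_smul, ← sub_eq_add_neg]

lemma rowCS (a b c d : B) (hq : ‖star b * b + star d * d‖ ≤ 1) :
    star (star b * a + star d * c) * (star b * a + star d * c) ≤ star a * a + star c * c := by
  have hq0 : 0 ≤ star b * b + star d * d :=
    add_nonneg (star_mul_self_nonneg b) (star_mul_self_nonneg d)
  have hq1 : star b * b + star d * d ≤ 1 :=
    (CStarAlgebra.norm_le_one_iff_of_nonneg _ hq0).1 hq
  set r : B := star b * a + star d * c with hr
  have h1 : 0 ≤ star (b * r - a) * (b * r - a) + star (d * r - c) * (d * r - c) :=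
    add_nonneg (star_mul_self_nonneg _) (star_mul_self_nonneg _)
  have h2 : star (b * r - a) * (b * r - a) + star (d * r - c) * (d * r - c)
      = star r * ((star b * b + star d * d) * r) - star r * r - star r * r
        + (star a * a + star c * c) := by
    rw [hr] at *
    simp only [star_sub, star_add, star_mul, star_star]
    noncomm_ring
  have h3 : star r * ((star b * b + star d * d) * r) ≤ star r * r := by
    have := star_left_conjugate_le_conjugate hq1 r
    rwa [mul_one, mul_assoc] at this
  have h5 : 0 ≤ star r * ((star b * b + star d * d) * r) - star r * r - star r * r
      + (star a * a + star c * c) := h2 ▸ h1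
  have h6 : 0 ≤ star r * r - star r * ((star b * b + star d * d) * r) := sub_nonneg.2 h3
  have h7 : (star r * ((star b * b + star d * d) * r) - star r * r - star r * r
      + (star a * a + star c * c)) + (star r * r - star r * ((star b * b + star d * d) * r))
      = (star a * a + star c * c) - star r * r := by abel
  exact sub_nonneg.1 (h7 ▸ add_nonneg h5 h6)

lemma cp_schwarz (φ : B →L[ℂ] B') (hcp : IsCompletelyPositive ⇑φ) (hn : ‖φ‖ ≤ 1) (x : B) :
    star (φ x) * φ x ≤ φ (star x * x) := by
  obtain ⟨L, hL⟩ := hcp 2 !![x, 1; 0, 0]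
  have e00 := Matrix.ext_iff.mpr hL 0 0
  have e10 := Matrix.ext_iff.mpr hL 1 0
  have e11 := Matrix.ext_iff.mpr hL 1 1
  simp only [Matrix.map_apply, Matrix.mul_apply, Matrix.conjTranspose_apply, Fin.sum_univ_two,
    Matrix.cons_val', Matrix.cons_val_zero, Matrix.cons_val_one, Matrix.head_cons,
    Matrix.empty_val', Matrix.cons_val_fin_one, Matrix.head_fin_const, Matrix.of_apply,
    star_zero, zero_mul, mul_zero, add_zero, star_one, one_mul, mul_one] at e00 e10 e11
  -- e00 : φ (star x * x) = star (L 0 0) * L 0 0 + star (L 1 0) * L 1 0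
  -- e10 : φ x = star (L 0 1) * L 0 0 + star (L 1 1) * L 1 0
  -- e11 : φ 1 = star (L 0 1) * L 0 1 + star (L 1 1) * L 1 1
  have hone : ‖(1:B)‖ ≤ 1 := by
    have h := CStarRing.norm_star_mul_self (x := (1:B))
    rw [star_one, one_mul] at h
    nlinarith [norm_nonneg (1:B)]
  have hq : ‖star (L 0 1) * L 0 1 + star (L 1 1) * L 1 1‖ ≤ 1 := by
    rw [← e11]
    calc ‖φ 1‖ ≤ ‖φ‖ * ‖(1:B)‖ := φ.le_opNorm 1
    _ ≤ 1 := by nlinarith [norm_nonneg φ, norm_nonneg (1:B)]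
  have := rowCS (L 0 0) (L 0 1) (L 1 0) (L 1 1) hq
  rw [← e10, ← e00] at this
  exact this
lemma cp_mult (Φ : B →L[ℂ] B') (Ψ : B' →L[ℂ] B)
    (hΦcp : IsCompletelyPositive ⇑Φ) (hΦn : ‖Φ‖ ≤ 1)
    (hΨcp : IsCompletelyPositive ⇑Ψ) (hΨn : ‖Ψ‖ ≤ 1)
    (hΨΦ : ∀ x, Ψ (Φ x) = x) (hΦΨ : ∀ y, Φ (Ψ y) = y) :
    ∀ x y : B, Φ (x * y) = Φ x * Φ y := by
  have hΨinj : Function.Injective Ψ := fun p q h => by rw [← hΦΨ p, ← hΦΨ q, h]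
  have hsq : ∀ x : B, Φ (star x * x) = star (Φ x) * Φ x := by
    intro x
    have hd : 0 ≤ Φ (star x * x) - star (Φ x) * Φ x := sub_nonneg.2 (cp_schwarz Φ hΦcp hΦn x)
    have h1 : Ψ (Φ (star x * x) - star (Φ x) * Φ x) ≤ 0 := by
      rw [map_sub, hΨΦ, sub_nonpos]
      have := cp_schwarz Ψ hΨcp hΨn (Φ x)
      rwa [hΨΦ] at this
    have h2 : 0 ≤ Ψ (Φ (star x * x) - star (Φ x) * Φ x) := cp_nonneg Ψ hΨcp hd
    have h4 : Φ (star x * x) - star (Φ x) * Φ x = 0 :=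
      hΨinj (by rw [le_antisymm h1 h2, map_zero])
    exact sub_eq_zero.1 h4
  have hpol : ∀ u v : B, Φ (star u * v) + Φ (star v * u)
      = star (Φ u) * Φ v + star (Φ v) * Φ u := by
    intro u v
    have h0 := hsq (u + v)
    simp only [star_add, add_mul, mul_add, map_add, hsq u, hsq v] at h0
    rw [← sub_eq_zero] at h0 ⊢
    rw [← h0]; abel
  have hpolI : ∀ u v : B, Φ (star u * v) - Φ (star v * u)
      = star (Φ u) * Φ v - star (Φ v) * Φ u := by
    intro u v
    have h0 := hpol (Complex.I • u) v
    simp only [star_smul, Complex.star_def, Complex.conj_I, smul_mul_assoc, mul_smul_comm,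
      neg_smul, map_neg, map_smul, star_neg, neg_mul, neg_add_eq_sub] at h0
    have h1 := congrArg (fun z => Complex.I • z) h0
    simp only [smul_sub, smul_add, smul_neg, smul_smul, Complex.I_mul_I, neg_smul, one_smul,
      neg_neg] at h1
    rw [← sub_eq_zero] at h1 ⊢
    rw [← sub_eq_zero] at h1
    abel_nf at h1 ⊢
    exact h1
  have key : ∀ u v : B, Φ (star u * v) = star (Φ u) * Φ v := by
    intro u v
    have h3 : Φ (star u * v) + Φ (star u * v) = star (Φ u) * Φ v + star (Φ u) * Φ v := by
      calc Φ (star u * v) + Φ (star u * v)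
          = (Φ (star u * v) + Φ (star v * u)) + (Φ (star u * v) - Φ (star v * u)) := by abel
        _ = (star (Φ u) * Φ v + star (Φ v) * Φ u)
            + (star (Φ u) * Φ v - star (Φ v) * Φ u) := by rw [hpol u v, hpolI u v]
        _ = star (Φ u) * Φ v + star (Φ u) * Φ v := by abel
    have h4 : (2:ℂ) • Φ (star u * v) = (2:ℂ) • (star (Φ u) * Φ v) := by
      rw [two_smul, two_smul]; exact h3
    have h5 := congrArg (fun z => (2:ℂ)⁻¹ • z) h4
    simp only [smul_smul] at h5
    norm_num at h5
    exact h5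
  intro x y
  have h := key (star x) y
  rwa [star_star, cp_star Φ hΦcp, star_star] at h

end Aux

lemma IsCompletelyPositive.comp_fun {A B C : Type*} [CStarAlgebra A] [CStarAlgebra B]
    [CStarAlgebra C] {f : A → B} {g : B → C} (hf : IsCompletelyPositive f)
    (hg : IsCompletelyPositive g) : IsCompletelyPositive (g ∘ f) := by
  intro k N
  obtain ⟨L, hL⟩ := hf k N
  obtain ⟨M, hM⟩ := hg k L
  exact ⟨M, by rw [← Matrix.map_map, hL, hM]⟩

/-- If a completely positive contraction `P` on a C⋆-algebra `A` admits two
factorizations `P = θ⁎ ∘ β ∘ θ = θ̃⁎ ∘ β̃ ∘ θ̃` through C⋆-dynamical systems `(B, β)` and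
`(B̃, β̃)` via completely positive contractions with `θ ∘ θ⁎ = id_B`, `θ̃ ∘ θ̃⁎ = id_{B̃}`, then
`φ = θ̃ ∘ θ⁎` is a `*`-isomorphism of `B` onto `B̃` with inverse `θ ∘ θ̃⁎`, and
`φ ∘ β = β̃ ∘ φ`; hence `(B, β)` and `(B̃, β̃)` are conjugate. -/
theorem stmt13 {A B B' : Type*} [CStarAlgebra A] [CStarAlgebra B] [CStarAlgebra B']
    (P : A →L[ℂ] A) (hPcp : IsCompletelyPositive (⇑P)) (hPn : ‖P‖ ≤ 1)
    (β : B →L[ℂ] B) (hβmul : ∀ x y : B, β (x * y) = β x * β y)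
    (hβstar : ∀ x : B, β (star x) = star (β x)) (hβbij : Function.Bijective β)
    (β' : B' →L[ℂ] B') (hβ'mul : ∀ x y : B', β' (x * y) = β' x * β' y)
    (hβ'star : ∀ x : B', β' (star x) = star (β' x)) (hβ'bij : Function.Bijective β')
    (θ : A →L[ℂ] B) (θs : B →L[ℂ] A)
    (hθcp : IsCompletelyPositive (⇑θ)) (hθn : ‖θ‖ ≤ 1)
    (hθscp : IsCompletelyPositive (⇑θs)) (hθsn : ‖θs‖ ≤ 1)
    (hid : θ.comp θs = ContinuousLinearMap.id ℂ B)
    (θ' : A →L[ℂ] B') (θ's : B' →L[ℂ] A)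
    (hθ'cp : IsCompletelyPositive (⇑θ')) (hθ'n : ‖θ'‖ ≤ 1)
    (hθ'scp : IsCompletelyPositive (⇑θ's)) (hθ'sn : ‖θ's‖ ≤ 1)
    (hid' : θ'.comp θ's = ContinuousLinearMap.id ℂ B')
    (hfac : P = θs.comp (β.comp θ)) (hfac' : P = θ's.comp (β'.comp θ')) :
    (∀ x y : B, (θ'.comp θs) (x * y) = (θ'.comp θs) x * (θ'.comp θs) y) ∧
    (∀ x : B, (θ'.comp θs) (star x) = star ((θ'.comp θs) x)) ∧
    Function.Bijective (θ'.comp θs) ∧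
    (θ.comp θ's).comp (θ'.comp θs) = ContinuousLinearMap.id ℂ B ∧
    (θ'.comp θs).comp (θ.comp θ's) = ContinuousLinearMap.id ℂ B' ∧
    (θ'.comp θs).comp β = β'.comp (θ'.comp θs) := by
  letI : PartialOrder B := CStarAlgebra.spectralOrder B
  haveI : StarOrderedRing B := CStarAlgebra.spectralOrderedRing B
  letI : PartialOrder B' := CStarAlgebra.spectralOrder B'
  haveI : StarOrderedRing B' := CStarAlgebra.spectralOrderedRing B'
  have hidp : ∀ b : B, θ (θs b) = b := fun b => by
    have := DFunLike.congr_fun hid b; simpa using this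
  have hid'p : ∀ b' : B', θ' (θ's b') = b' := fun b' => by
    have := DFunLike.congr_fun hid' b'; simpa using this
  have hPp : ∀ a : A, P a = θs (β (θ a)) := fun a => by rw [hfac]; rfl
  have hP'p : ∀ a : A, P a = θ's (β' (θ' a)) := fun a => by rw [hfac']; rfl
  have k5 : ∀ a : A, θ' (P a) = β' (θ' a) := fun a => by rw [hP'p, hid'p]
  have k6 : ∀ a : A, θ (P a) = β (θ a) := fun a => by rw [hPp, hidp]
  have k7 : ∀ b : B, θs (β b) = P (θs b) := fun b => by
    conv_lhs => rw [← hidp b]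
    rw [← hPp]
  have k8 : ∀ b' : B', θ's (β' b') = P (θ's b') := fun b' => by
    conv_lhs => rw [← hid'p b']
    rw [← hP'p]
  have hconj : ∀ b : B, θ' (θs (β b)) = β' (θ' (θs b)) := fun b => by rw [k7, k5]
  have hLR : ∀ b : B, θ (θ's (θ' (θs b))) = b := by
    intro b
    obtain ⟨a0, rfl⟩ := hβbij.2 b
    rw [k7, k5, ← hP'p, k6, hidp]
  have hRL : ∀ b' : B', θ' (θs (θ (θ's b'))) = b' := by
    intro b'
    obtain ⟨a0, rfl⟩ := hβ'bij.2 b'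
    rw [k8, k6, ← hPp, k5, hid'p]
  have hΦcp : IsCompletelyPositive ⇑(θ'.comp θs) := by
    rw [ContinuousLinearMap.coe_comp']
    exact hθscp.comp_fun hθ'cp
  have hΨcp : IsCompletelyPositive ⇑(θ.comp θ's) := by
    rw [ContinuousLinearMap.coe_comp']
    exact hθ'scp.comp_fun hθcp
  have hΦn : ‖θ'.comp θs‖ ≤ 1 :=
    le_trans (ContinuousLinearMap.opNorm_comp_le _ _)
      (by nlinarith [norm_nonneg θ', norm_nonneg θs])
  have hΨn : ‖θ.comp θ's‖ ≤ 1 :=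
    le_trans (ContinuousLinearMap.opNorm_comp_le _ _)
      (by nlinarith [norm_nonneg θ, norm_nonneg θ's])
  have hLR' : ∀ b : B, (θ.comp θ's) ((θ'.comp θs) b) = b := fun b => by
    simpa using hLR b
  have hRL' : ∀ b' : B', (θ'.comp θs) ((θ.comp θ's) b') = b' := fun b' => by
    simpa using hRL b'
  refine ⟨?_, ?_, ?_, ?_, ?_, ?_⟩
  · exact cp_mult (θ'.comp θs) (θ.comp θ's) hΦcp hΦn hΨcp hΨn hLR' hRL'
  · exact cp_star (θ'.comp θs) hΦcp
  · refine ⟨fun p q h => ?_, fun y => ⟨(θ.comp θ's) y, hRL' y⟩⟩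
    have h2 := congrArg (θ.comp θ's) h
    rwa [hLR' p, hLR' q] at h2
  · exact ContinuousLinearMap.ext fun b => by
      simpa using hLR' b
  · exact ContinuousLinearMap.ext fun b' => by
      simpa using hRL' b'
  · exact ContinuousLinearMap.ext fun b => by
      simpa using hconj b
end

section
/- Let A be a finite-dimensional C*-algebra and let P : A → A be a unital completely positive map. Then there is a strictly increasing sequence of positive integers n₁ < n₂ < ⋯ such that P^{n_k} converges (in operator norm) to an idempotent completely positive map E : A → A; moreover E is unique in the sense that if m₁ < m₂ < ⋯ is any strictly increasing sequence of positive integers for which the powers P^{m_k} converge to an idempotent map F, then F = E. -/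
set_option linter.unusedSectionVars false

open Filter Topology Metric ComplexStarModule

section CPAux

variable {A : Type*} [CStarAlgebra A] [PartialOrder A] [StarOrderedRing A]

lemma cp_comp {f g : A → A} (hf : IsCompletelyPositive f) (hg : IsCompletelyPositive g) :
    IsCompletelyPositive (f ∘ g) := by
  intro k N
  obtain ⟨L, hL⟩ := hg k N
  obtain ⟨L', hL'⟩ := hf k L
  exact ⟨L', by rw [← Matrix.map_map, hL, hL']⟩

lemma cp_pow (P : A →L[ℂ] A) (hP : IsCompletelyPositive ⇑P) (n : ℕ) :
    IsCompletelyPositive ⇑(P ^ (n + 1)) := by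
  induction n with
  | zero => simpa using hP
  | succ n ih =>
      have h : (⇑(P ^ (n + 2)) : A → A) = ⇑(P ^ (n + 1)) ∘ ⇑P := by
        funext x; simp [pow_succ, ContinuousLinearMap.mul_apply]
      rw [h]; exact cp_comp ih hP

lemma cp_posMap {φ : A → A} (h : IsCompletelyPositive φ) {a : A} (ha : 0 ≤ a) : 0 ≤ φ a := by
  obtain ⟨L, hL⟩ := h 1 (fun _ _ => CFC.sqrt a)
  have h00 : φ (star (CFC.sqrt a) * CFC.sqrt a) = star (L 0 0) * L 0 0 := by
    have := congrFun (congrFun hL 0) 0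
    change φ (∑ _j : Fin 1, star (CFC.sqrt a) * CFC.sqrt a) = _ at this
    simpa [Matrix.map_apply, Matrix.mul_apply, Matrix.conjTranspose_apply,
      Fin.sum_univ_one] using this
  rw [(IsSelfAdjoint.of_nonneg (CFC.sqrt_nonneg (a := a))).star_eq, CFC.sqrt_mul_sqrt_self a ha] at h00
  rw [h00]
  exact star_mul_self_nonneg _

lemma norm_one_le' : ‖(1 : A)‖ ≤ 1 := by
  have h := CStarRing.norm_star_mul_self (x := (1 : A))
  simp only [star_one, one_mul] at h
  nlinarith [norm_nonneg (1 : A)]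

lemma pos_map_mono (φ : A →L[ℂ] A) (hpos : ∀ a : A, 0 ≤ a → 0 ≤ φ a)
    {x y : A} (hxy : x ≤ y) : φ x ≤ φ y := by
  have h := hpos (y - x) (sub_nonneg.2 hxy)
  rw [map_sub] at h
  exact sub_nonneg.1 h

lemma phi_algebraMap (φ : A →L[ℂ] A) (hu : φ 1 = 1) (s : ℝ) :
    φ (algebraMap ℝ A s) = algebraMap ℝ A s := by
  have h : (algebraMap ℝ A s : A) = (s : ℂ) • (1 : A) := by
    rw [Algebra.algebraMap_eq_smul_one, ← algebraMap_smul ℂ s (1 : A)]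
    norm_num
  rw [h, map_smul, hu]

lemma norm_algebraMap_le (s : ℝ) (hs : 0 ≤ s) : ‖(algebraMap ℝ A s : A)‖ ≤ s := by
  rw [Algebra.algebraMap_eq_smul_one, norm_smul]
  calc ‖s‖ * ‖(1:A)‖ ≤ ‖s‖ * 1 := by
        gcongr; exact norm_one_le'
    _ = s := by rw [mul_one, Real.norm_eq_abs, abs_of_nonneg hs]

lemma norm_apply_le_sa (φ : A →L[ℂ] A) (hpos : ∀ a : A, 0 ≤ a → 0 ≤ φ a) (hu : φ 1 = 1)
    {b : A} (hb : IsSelfAdjoint b) : ‖φ b‖ ≤ 3 * ‖b‖ := by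
  set t : ℝ := ‖b‖ with ht
  have h1 : b ≤ algebraMap ℝ A t := hb.le_algebraMap_norm_self
  have h2 : -b ≤ algebraMap ℝ A t := by simpa using hb.neg.le_algebraMap_norm_self
  have hx0 : (0 : A) ≤ b + algebraMap ℝ A t := by
    have := add_le_add_right h2 b
    simpa using this
  have hxu : b + algebraMap ℝ A t ≤ algebraMap ℝ A (2 * t) := by
    have := add_le_add_left h1 (algebraMap ℝ A t)
    calc b + algebraMap ℝ A t ≤ algebraMap ℝ A t + algebraMap ℝ A t := this
      _ = algebraMap ℝ A (2 * t) := by rw [two_mul, map_add]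
  have hf0 : 0 ≤ φ (b + algebraMap ℝ A t) := hpos _ hx0
  have hfu : φ (b + algebraMap ℝ A t) ≤ algebraMap ℝ A (2 * t) := by
    rw [← phi_algebraMap φ hu (2 * t)]
    exact pos_map_mono φ hpos hxu
  have hn1 : ‖φ (b + algebraMap ℝ A t)‖ ≤ 2 * t := by
    refine le_trans (CStarAlgebra.norm_le_norm_of_nonneg_of_le hf0 hfu) ?_
    exact norm_algebraMap_le _ (by positivity)
  have hsplit : φ b = φ (b + algebraMap ℝ A t) - algebraMap ℝ A t := by
    rw [map_add, phi_algebraMap φ hu]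
    abel
  rw [hsplit]
  calc ‖φ (b + algebraMap ℝ A t) - algebraMap ℝ A t‖
      ≤ ‖φ (b + algebraMap ℝ A t)‖ + ‖(algebraMap ℝ A t : A)‖ := norm_sub_le _ _
    _ ≤ 2 * t + t := by
        have := norm_algebraMap_le (A := A) t (norm_nonneg b)
        linarith
    _ = 3 * t := by ring

lemma norm_apply_le' (φ : A →L[ℂ] A) (hpos : ∀ a : A, 0 ≤ a → 0 ≤ φ a) (hu : φ 1 = 1)
    (a : A) : ‖φ a‖ ≤ 6 * ‖a‖ := by
  have hre : ‖(ℜ a : A)‖ ≤ ‖a‖ := by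
    rw [realPart_apply_coe, norm_smul]
    calc ‖(2:ℝ)⁻¹‖ * ‖a + star a‖ ≤ (2:ℝ)⁻¹ * (‖a‖ + ‖a‖) := by
          rw [Real.norm_eq_abs, abs_of_nonneg (by norm_num : (0:ℝ) ≤ (2:ℝ)⁻¹)]
          gcongr
          exact le_trans (norm_add_le _ _) (by rw [norm_star])
      _ = ‖a‖ := by ring
  have him : ‖(ℑ a : A)‖ ≤ ‖a‖ := by
    rw [imaginaryPart_apply_coe, norm_smul, norm_smul]
    calc ‖-Complex.I‖ * (‖(2:ℝ)⁻¹‖ * ‖a - star a‖) ≤ 1 * ((2:ℝ)⁻¹ * (‖a‖ + ‖a‖)) := by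
          rw [norm_neg, Complex.norm_I, Real.norm_eq_abs,
            abs_of_nonneg (by norm_num : (0:ℝ) ≤ (2:ℝ)⁻¹)]
          gcongr
          exact le_trans (norm_sub_le _ _) (by rw [norm_star])
      _ = ‖a‖ := by ring
  have hdecomp : a = (ℜ a : A) + Complex.I • (ℑ a : A) := (realPart_add_I_smul_imaginaryPart a).symm
  calc ‖φ a‖ = ‖φ (ℜ a : A) + Complex.I • φ (ℑ a : A)‖ := by
        conv_lhs => rw [hdecomp]
        rw [map_add, map_smul]
    _ ≤ ‖φ (ℜ a : A)‖ + ‖Complex.I • φ (ℑ a : A)‖ := norm_add_le _ _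
    _ ≤ 3 * ‖(ℜ a : A)‖ + 3 * ‖(ℑ a : A)‖ := by
        rw [norm_smul, Complex.norm_I, one_mul]
        have h1 := norm_apply_le_sa φ hpos hu (realPart a).2
        have h2 := norm_apply_le_sa φ hpos hu (imaginaryPart a).2
        linarith
    _ ≤ 6 * ‖a‖ := by linarith


lemma cp_limit [FiniteDimensional ℂ A] (P E : A →L[ℂ] A) (hP : IsCompletelyPositive ⇑P)
    (hb : ∀ n : ℕ, ‖P ^ (n + 1)‖ ≤ 6)
    (f : ℕ → ℕ) (hconv : Filter.Tendsto (fun j => P ^ (f j + 1)) atTop (nhds E)) :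
    IsCompletelyPositive ⇑E := by
  intro k N
  choose Lc hLc using fun j => cp_pow P hP (f j) k N
  set X : Fin k → Fin k → A := fun a b => ∑ c : Fin k, star (N c a) * N c b with hXdef
  have hL : ∀ j a b, (P ^ (f j + 1)) (X a b) = ∑ c : Fin k, star (Lc j c a) * Lc j c b := by
    intro j a b
    have h := congrFun (congrFun (hLc j) a) b
    simpa only [Matrix.map_apply, Matrix.mul_apply, Matrix.conjTranspose_apply] using h
  set D : ℝ := ∑ b : Fin k, ‖X b b‖ with hD
  have hD0 : (0:ℝ) ≤ D := Finset.sum_nonneg fun _ _ => norm_nonneg _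
  set C : ℝ := Real.sqrt (6 * D) with hC
  have hentry : ∀ j a b, ‖Lc j a b‖ ≤ C := by
    intro j a b
    have hebd : ‖(P ^ (f j + 1)) (X b b)‖ ≤ 6 * D := by
      have h2 : ‖X b b‖ ≤ D :=
        Finset.single_le_sum (f := fun b' => ‖X b' b'‖)
          (fun _ _ => norm_nonneg _) (Finset.mem_univ b)
      calc ‖(P ^ (f j + 1)) (X b b)‖ ≤ ‖P ^ (f j + 1)‖ * ‖X b b‖ :=
            ContinuousLinearMap.le_opNorm _ _
        _ ≤ 6 * D := mul_le_mul (hb _) h2 (norm_nonneg _) (by norm_num)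
    have hle : star (Lc j a b) * Lc j a b ≤ ∑ c : Fin k, star (Lc j c b) * Lc j c b :=
      Finset.single_le_sum (f := fun c => star (Lc j c b) * Lc j c b)
        (fun c _ => star_mul_self_nonneg _) (Finset.mem_univ a)
    have hnn : ‖star (Lc j a b) * Lc j a b‖ ≤ 6 * D := by
      refine le_trans (CStarAlgebra.norm_le_norm_of_nonneg_of_le (star_mul_self_nonneg _) hle) ?_
      rw [← hL j b b]; exact hebd
    have hsq : ‖Lc j a b‖ ^ 2 ≤ 6 * D := by
      rw [sq, ← CStarRing.norm_star_mul_self]; exact hnn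
    exact (Real.le_sqrt (norm_nonneg _) (by positivity)).2 hsq
  haveI : ProperSpace (Fin k → Fin k → A) := FiniteDimensional.proper ℂ _
  set ℓ : ℕ → (Fin k → Fin k → A) := fun j a b => Lc j a b with hldef
  have hmem : ∀ j, ℓ j ∈ closedBall (0 : Fin k → Fin k → A) C := by
    intro j
    rw [mem_closedBall_zero_iff]
    refine (pi_norm_le_iff_of_nonneg (Real.sqrt_nonneg _)).2 fun a => ?_
    exact (pi_norm_le_iff_of_nonneg (Real.sqrt_nonneg _)).2 fun b => hentry j a b
  obtain ⟨Lw, -, ψ, hψ, hconvL⟩ :=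
    (isCompact_closedBall (0 : Fin k → Fin k → A) C).tendsto_subseq hmem
  have hLten : ∀ c d : Fin k, Filter.Tendsto (fun j => Lc (ψ j) c d) atTop (nhds (Lw c d)) := by
    intro c d
    exact tendsto_pi_nhds.1 (tendsto_pi_nhds.1 hconvL c) d
  refine ⟨Matrix.of (fun a b => Lw a b), ?_⟩
  funext a b
  have hconv1 : Filter.Tendsto (fun j => (P ^ (f (ψ j) + 1)) (X a b)) atTop
      (nhds (E (X a b))) := by
    have h1 : Filter.Tendsto (fun j => P ^ (f (ψ j) + 1)) atTop (nhds E) :=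
      hconv.comp hψ.tendsto_atTop
    exact (((ContinuousLinearMap.apply ℂ A (X a b)).continuous.tendsto E).comp h1 : _)
  have hconv2 : Filter.Tendsto (fun j => (P ^ (f (ψ j) + 1)) (X a b)) atTop
      (nhds (∑ c : Fin k, star (Lw c a) * Lw c b)) := by
    refine Filter.Tendsto.congr (fun j => (hL (ψ j) a b).symm) ?_
    exact tendsto_finset_sum _ fun c _ => ((hLten c a).star.mul (hLten c b))
  have hkey := tendsto_nhds_unique hconv1 hconv2
  show ((N.conjTranspose * N).map ⇑E) a b = _
  simp only [Matrix.map_apply, Matrix.mul_apply, Matrix.conjTranspose_apply, Matrix.of_apply]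
  calc E (∑ c : Fin k, star (N c a) * N c b) = E (X a b) := by rw [hXdef]
    _ = ∑ c : Fin k, star (Lw c a) * Lw c b := hkey


section Lam
variable {R : Type*} [NormedRing R] [ProperSpace R]

def lam (P : R) : Set R := ⋂ N : ℕ, closure ((fun n : ℕ => P ^ (n + 1)) '' Set.Ici N)

variable {P : R}

lemma lam_spec {Q : R} (hQ : Q ∈ lam P) :
    ∀ ε > 0, ∀ N : ℕ, ∃ n, N ≤ n ∧ ‖P ^ (n + 1) - Q‖ < ε := by
  intro ε hε N
  have h := Set.mem_iInter.1 hQ N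
  rcases Metric.mem_closure_iff.1 h ε hε with ⟨x, hx, hd⟩
  rcases hx with ⟨n, hn, rfl⟩
  exact ⟨n, hn, by rwa [dist_eq_norm'] at hd⟩

lemma lam_of {Q : R} (h : ∀ ε > 0, ∀ N : ℕ, ∃ n, N ≤ n ∧ ‖P ^ (n + 1) - Q‖ < ε) :
    Q ∈ lam P := by
  refine Set.mem_iInter.2 fun N => Metric.mem_closure_iff.2 fun ε hε => ?_
  obtain ⟨n, hn, hlt⟩ := h ε hε N
  exact ⟨P ^ (n + 1), ⟨n, hn, rfl⟩, by rwa [dist_eq_norm']⟩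

variable (hb : ∀ n : ℕ, ‖P ^ (n + 1)‖ ≤ 6)
include hb

lemma lam_subset : lam P ⊆ closedBall (0 : R) 6 := by
  intro Q hQ
  have h := Set.mem_iInter.1 hQ 0
  refine closure_minimal ?_ Metric.isClosed_closedBall h
  rintro _ ⟨n, -, rfl⟩
  simpa [mem_closedBall_zero_iff] using hb n

lemma lam_norm_le {Q : R} (hQ : Q ∈ lam P) : ‖Q‖ ≤ 6 :=
  mem_closedBall_zero_iff.1 (lam_subset hb hQ)

lemma lam_compact : IsCompact (lam P) :=
  (isCompact_closedBall (0 : R) 6).of_isClosed_subset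
    (isClosed_iInter fun _ => isClosed_closure) (lam_subset hb)

lemma lam_nonempty : (lam P).Nonempty := by
  have hmem : ∀ n : ℕ, P ^ (n + 1) ∈ closedBall (0 : R) 6 := fun n => by
    simpa [mem_closedBall_zero_iff] using hb n
  obtain ⟨Q, -, ψ, hψ, hconv⟩ := (isCompact_closedBall (0 : R) 6).tendsto_subseq hmem
  refine ⟨Q, lam_of fun ε hε N => ?_⟩
  obtain ⟨K, hK⟩ := Metric.tendsto_atTop.1 hconv ε hε
  refine ⟨ψ (max K N) + 0, ?_, ?_⟩
  · exact le_trans (le_max_right K N) (hψ.le_apply)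
  · have := hK (max K N) (le_max_left K N)
    simpa [dist_eq_norm] using this

lemma lam_mul {Q S : R} (hQ : Q ∈ lam P) (hS : S ∈ lam P) : Q * S ∈ lam P := by
  refine lam_of fun ε hε N => ?_
  have hδ : (0:ℝ) < ε / 13 := by positivity
  obtain ⟨n, hn, h1⟩ := lam_spec hQ (ε / 13) hδ N
  obtain ⟨m, -, h2⟩ := lam_spec hS (ε / 13) hδ 0
  refine ⟨n + m + 1, le_trans hn (by omega), ?_⟩
  have hpow : P ^ (n + m + 1 + 1) = P ^ (n + 1) * P ^ (m + 1) := by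
    rw [← pow_add]; ring_nf
  have hid : P ^ (n + 1) * P ^ (m + 1) - Q * S
      = P ^ (n + 1) * (P ^ (m + 1) - S) + (P ^ (n + 1) - Q) * S := by
    rw [mul_sub, sub_mul]; abel
  have hQ6 := lam_norm_le hb hQ
  have hS6 := lam_norm_le hb hS
  have hb6 := hb n
  calc ‖P ^ (n + m + 1 + 1) - Q * S‖
      = ‖P ^ (n + 1) * (P ^ (m + 1) - S) + (P ^ (n + 1) - Q) * S‖ := by rw [hpow, hid]
    _ ≤ ‖P ^ (n + 1) * (P ^ (m + 1) - S)‖ + ‖(P ^ (n + 1) - Q) * S‖ := norm_add_le _ _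
    _ ≤ ‖P ^ (n + 1)‖ * ‖P ^ (m + 1) - S‖ + ‖P ^ (n + 1) - Q‖ * ‖S‖ :=
        add_le_add (norm_mul_le _ _) (norm_mul_le _ _)
    _ < ε := by
        have t1 : ‖P ^ (n + 1)‖ * ‖P ^ (m + 1) - S‖ ≤ 6 * (ε / 13) :=
          mul_le_mul hb6 h2.le (norm_nonneg _) (by norm_num)
        have t2 : ‖P ^ (n + 1) - Q‖ * ‖S‖ ≤ (ε / 13) * 6 :=
          mul_le_mul h1.le hS6 (norm_nonneg _) hδ.le
        linarith

lemma lam_comm {Q S : R} (hQ : Q ∈ lam P) (hS : S ∈ lam P) : Q * S = S * Q := by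
  have key : ∀ ε > (0:ℝ), ‖Q * S - S * Q‖ < ε := by
    intro ε hε
    have hδ : (0:ℝ) < ε / 25 := by positivity
    obtain ⟨n, -, h1⟩ := lam_spec hQ (ε / 25) hδ 0
    obtain ⟨m, -, h2⟩ := lam_spec hS (ε / 25) hδ 0
    have hQ6 := lam_norm_le hb hQ
    have hS6 := lam_norm_le hb hS
    have h1' : ‖Q - P ^ (n + 1)‖ ≤ ε / 25 := by rw [norm_sub_rev]; exact h1.le
    have h2' : ‖S - P ^ (m + 1)‖ ≤ ε / 25 := by rw [norm_sub_rev]; exact h2.le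
    have hcomm : P ^ (n + 1) * P ^ (m + 1) = P ^ (m + 1) * P ^ (n + 1) := by
      rw [← pow_add, ← pow_add]; ring_nf
    have e1 : ‖Q * S - P ^ (n + 1) * P ^ (m + 1)‖ ≤ (ε/25) * 6 + 6 * (ε/25) := by
      have hid : Q * S - P ^ (n + 1) * P ^ (m + 1)
          = (Q - P ^ (n + 1)) * S + P ^ (n + 1) * (S - P ^ (m + 1)) := by
        rw [sub_mul, mul_sub]; abel
      rw [hid]
      have t1 : ‖(Q - P ^ (n + 1)) * S‖ ≤ (ε/25) * 6 :=
        le_trans (norm_mul_le _ _) (mul_le_mul h1' hS6 (norm_nonneg _) hδ.le)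
      have t2 : ‖P ^ (n + 1) * (S - P ^ (m + 1))‖ ≤ 6 * (ε/25) :=
        le_trans (norm_mul_le _ _) (mul_le_mul (hb n) h2' (norm_nonneg _) (by norm_num))
      exact le_trans (norm_add_le _ _) (add_le_add t1 t2)
    have e2 : ‖S * Q - P ^ (m + 1) * P ^ (n + 1)‖ ≤ (ε/25) * 6 + 6 * (ε/25) := by
      have hid : S * Q - P ^ (m + 1) * P ^ (n + 1)
          = (S - P ^ (m + 1)) * Q + P ^ (m + 1) * (Q - P ^ (n + 1)) := by
        rw [sub_mul, mul_sub]; abel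
      rw [hid]
      have t1 : ‖(S - P ^ (m + 1)) * Q‖ ≤ (ε/25) * 6 :=
        le_trans (norm_mul_le _ _) (mul_le_mul h2' hQ6 (norm_nonneg _) hδ.le)
      have t2 : ‖P ^ (m + 1) * (Q - P ^ (n + 1))‖ ≤ 6 * (ε/25) :=
        le_trans (norm_mul_le _ _) (mul_le_mul (hb m) h1' (norm_nonneg _) (by norm_num))
      exact le_trans (norm_add_le _ _) (add_le_add t1 t2)
    have e3 : ‖Q * S - S * Q‖ ≤ ‖Q * S - P ^ (n + 1) * P ^ (m + 1)‖
        + ‖S * Q - P ^ (m + 1) * P ^ (n + 1)‖ := by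
      calc ‖Q * S - S * Q‖
          = ‖(Q * S - P ^ (n + 1) * P ^ (m + 1))
              - (S * Q - P ^ (m + 1) * P ^ (n + 1))
              + (P ^ (n + 1) * P ^ (m + 1) - P ^ (m + 1) * P ^ (n + 1))‖ := by
            congr 1; abel
        _ = ‖(Q * S - P ^ (n + 1) * P ^ (m + 1))
              - (S * Q - P ^ (m + 1) * P ^ (n + 1))‖ := by
            rw [hcomm, sub_self, add_zero]
        _ ≤ _ := norm_sub_le _ _
    linarith
  by_contra hne
  have hpos : 0 < ‖Q * S - S * Q‖ := by
    rw [norm_pos_iff, sub_ne_zero]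
    exact fun h => hne h
  exact absurd (key _ hpos) (lt_irrefl _)

lemma lam_div {Q S : R} (hQ : Q ∈ lam P) (hS : S ∈ lam P) :
    ∃ T ∈ lam P, Q * T = S := by
  -- choose approximating exponents
  have hsel : ∀ k : ℕ, ∃ n m : ℕ, k ≤ n ∧ n + k + 1 ≤ m ∧
      ‖P ^ (n + 1) - Q‖ < 1 / (k + 1) ∧ ‖P ^ (m + 1) - S‖ < 1 / (k + 1) := by
    intro k
    have hk : (0:ℝ) < 1 / (k + 1) := by positivity
    obtain ⟨n, hn, h1⟩ := lam_spec hQ (1 / (k + 1)) hk k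
    obtain ⟨m, hm, h2⟩ := lam_spec hS (1 / (k + 1)) hk (n + k + 1)
    exact ⟨n, m, hn, hm, h1, h2⟩
  choose nn mm hn hm h1 h2 using hsel
  set dd : ℕ → ℕ := fun k => mm k - nn k - 1 with hdd
  have hdk : ∀ k, k ≤ dd k := fun k => by have := hm k; simp only [hdd]; omega
  have hsum : ∀ k, (nn k + 1) + (dd k + 1) = mm k + 1 := fun k => by have := hm k; simp only [hdd]; omega
  have hmem : ∀ k : ℕ, P ^ (dd k + 1) ∈ closedBall (0 : R) 6 := fun k => by
    simpa [mem_closedBall_zero_iff] using hb (dd k)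
  obtain ⟨T, hTball, ψ, hψ, hconv⟩ := (isCompact_closedBall (0 : R) 6).tendsto_subseq hmem
  have hT : T ∈ lam P := by
    refine lam_of fun ε hε N => ?_
    obtain ⟨K, hK⟩ := Metric.tendsto_atTop.1 hconv ε hε
    refine ⟨dd (ψ (max K N)), le_trans (le_trans (le_max_right K N) hψ.le_apply)
      (hdk _), ?_⟩
    have := hK (max K N) (le_max_left K N)
    simpa [dist_eq_norm] using this
  refine ⟨T, hT, ?_⟩
  have key : ∀ ε > (0:ℝ), ‖Q * T - S‖ < ε := by
    intro ε hε
    obtain ⟨K, hK⟩ := Metric.tendsto_atTop.1 hconv (ε / 20) (by positivity)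
    obtain ⟨K', hK'⟩ := exists_nat_one_div_lt (ε := ε / 20) (by positivity)
    set j : ℕ := max K K' with hj
    have hj1 : ‖P ^ (dd (ψ j) + 1) - T‖ < ε / 20 := by
      have := hK j (le_max_left _ _)
      simpa [dist_eq_norm] using this
    have hjK' : (1:ℝ) / (ψ j + 1) < ε / 20 := by
      have h1le : (1:ℝ) / (ψ j + 1) ≤ 1 / (K' + 1) := by
        apply div_le_div_of_nonneg_left (by norm_num) (by positivity)
        have : (K' : ℝ) ≤ ψ j := by
          exact_mod_cast le_trans (le_max_right K K') hψ.le_apply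
        linarith
      linarith
    have hq : ‖P ^ (nn (ψ j) + 1) - Q‖ < ε / 20 := lt_trans (h1 (ψ j)) hjK'
    have hs : ‖P ^ (mm (ψ j) + 1) - S‖ < ε / 20 := lt_trans (h2 (ψ j)) hjK'
    have hT6 : ‖T‖ ≤ 6 := mem_closedBall_zero_iff.1 hTball
    have hprod : P ^ (nn (ψ j) + 1) * P ^ (dd (ψ j) + 1) = P ^ (mm (ψ j) + 1) := by
      rw [← pow_add, hsum]
    have hid : Q * T - S = (Q - P ^ (nn (ψ j) + 1)) * T
        + P ^ (nn (ψ j) + 1) * (T - P ^ (dd (ψ j) + 1))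
        + (P ^ (mm (ψ j) + 1) - S) := by
      rw [sub_mul, mul_sub, ← hprod]; abel
    have t1 : ‖(Q - P ^ (nn (ψ j) + 1)) * T‖ ≤ (ε/20) * 6 := by
      refine le_trans (norm_mul_le _ _) (mul_le_mul ?_ hT6 (norm_nonneg _) (by positivity))
      rw [norm_sub_rev]; exact hq.le
    have t2 : ‖P ^ (nn (ψ j) + 1) * (T - P ^ (dd (ψ j) + 1))‖ ≤ 6 * (ε/20) := by
      refine le_trans (norm_mul_le _ _) (mul_le_mul (hb _) ?_ (norm_nonneg _) (by norm_num))
      rw [norm_sub_rev]; exact hj1.le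
    calc ‖Q * T - S‖ ≤ ‖(Q - P ^ (nn (ψ j) + 1)) * T
        + P ^ (nn (ψ j) + 1) * (T - P ^ (dd (ψ j) + 1))‖
        + ‖P ^ (mm (ψ j) + 1) - S‖ := by rw [hid]; exact norm_add_le _ _
      _ ≤ (ε/20) * 6 + 6 * (ε/20) + ε/20 := by
          have := le_trans (norm_add_le ((Q - P ^ (nn (ψ j) + 1)) * T)
            (P ^ (nn (ψ j) + 1) * (T - P ^ (dd (ψ j) + 1)))) (add_le_add t1 t2)
          linarith
      _ < ε := by linarith
  by_contra hne
  have hpos : 0 < ‖Q * T - S‖ := by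
    rw [norm_pos_iff, sub_ne_zero]; exact fun h => hne h
  exact absurd (key _ hpos) (lt_irrefl _)

lemma lam_idem : ∃ E ∈ lam P, E * E = E := by
  exact exists_idempotent_in_compact_subsemigroup (fun r => continuous_mul_right r)
    (lam P) (lam_nonempty hb) (lam_compact hb) (fun x hx y hy => lam_mul hb hx hy)

lemma lam_unique_idem {E F : R} (hE : E ∈ lam P) (hEE : E * E = E)
    (hF : F ∈ lam P) (hFF : F * F = F) : F = E := by
  obtain ⟨T, hT, hET⟩ := lam_div hb hE hF
  obtain ⟨U, hU, hFU⟩ := lam_div hb hF hE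
  have h1 : E * F = F := by rw [← hET, ← mul_assoc, hEE]
  have h2 : F * E = E := by rw [← hFU, ← mul_assoc, hFF]
  rw [← h1, lam_comm hb hE hF, h2]

end Lam


end CPAux

/-- **Kuperberg.** Let `A` be a finite-dimensional C⋆-algebra and `P : A → A` a
unital completely positive map.  Then there is a strictly increasing sequence of positive
integers `n₁ < n₂ < ⋯` such that `P^{n_k}` converges in operator norm to an idempotent
completely positive map `E`, and `E` is the unique idempotent limit of powers of `P` along
strictly increasing sequences. -/
theorem stmt16 {A : Type*} [CStarAlgebra A] [FiniteDimensional ℂ A]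
    (P : A →L[ℂ] A) (hPcp : IsCompletelyPositive (⇑P)) (hPu : P 1 = 1) :
    ∃ (n : ℕ → ℕ) (E : A →L[ℂ] A),
      StrictMono n ∧ (∀ k, 1 ≤ n k) ∧
      E.comp E = E ∧ IsCompletelyPositive (⇑E) ∧
      Filter.Tendsto (fun k : ℕ => ‖P ^ n k - E‖) Filter.atTop (nhds 0) ∧
      ∀ (m : ℕ → ℕ) (F : A →L[ℂ] A), StrictMono m → (∀ k, 1 ≤ m k) →
        F.comp F = F →
        Filter.Tendsto (fun k : ℕ => ‖P ^ m k - F‖) Filter.atTop (nhds 0) →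
        F = E := by
  letI : PartialOrder A := CStarAlgebra.spectralOrder A
  haveI : StarOrderedRing A := CStarAlgebra.spectralOrderedRing A
  haveI : ProperSpace (A →L[ℂ] A) := FiniteDimensional.proper ℂ _
  -- powers are unital
  have hpu : ∀ n : ℕ, (P ^ (n + 1)) 1 = 1 := by
    intro n
    induction n with
    | zero => simpa using hPu
    | succ n ih => rw [pow_succ, ContinuousLinearMap.mul_apply, hPu, ih]
  -- uniform bound on powers
  have hb : ∀ n : ℕ, ‖P ^ (n + 1)‖ ≤ 6 := by
    intro n
    refine ContinuousLinearMap.opNorm_le_bound _ (by norm_num) fun a => ?_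
    exact norm_apply_le' (P ^ (n + 1))
      (fun x hx => cp_posMap (cp_pow P hPcp n) hx) (hpu n) a
  -- the set of limit points of powers, with its idempotent
  obtain ⟨E, hElam, hEE⟩ := lam_idem hb
  -- a subsequence of powers converging to `E`
  have hsel : ∀ k N' : ℕ, ∃ n, N' ≤ n ∧ ‖P ^ (n + 1) - E‖ < 1 / (k + 1) :=
    fun k N' => lam_spec hElam (1 / (k + 1)) (by positivity) N'
  choose g hg1 hg2 using hsel
  let f : ℕ → ℕ := fun k => Nat.rec (g 0 0) (fun k' fk => g (k' + 1) (fk + 1)) k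
  have hfs : ∀ k, f (k + 1) = g (k + 1) (f k + 1) := fun k => rfl
  have hfmono : StrictMono f := by
    refine strictMono_nat_of_lt_succ fun k => ?_
    have := hg1 (k + 1) (f k + 1)
    rw [hfs]; omega
  have hfbd : ∀ k : ℕ, ‖P ^ (f k + 1) - E‖ < 1 / (k + 1) := by
    intro k
    cases k with
    | zero => exact hg2 0 0
    | succ k' => rw [hfs]; exact hg2 (k' + 1) (f k' + 1)
  have hnorm0 : Filter.Tendsto (fun k : ℕ => ‖P ^ (f k + 1) - E‖) atTop (nhds 0) := by
    refine squeeze_zero (fun k => norm_nonneg _) (fun k => (hfbd k).le) ?_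
    exact tendsto_one_div_add_atTop_nhds_zero_nat
  have htend : Filter.Tendsto (fun j : ℕ => P ^ (f j + 1)) atTop (nhds E) :=
    tendsto_iff_norm_sub_tendsto_zero.2 hnorm0
  refine ⟨fun k => f k + 1, E, ?_, fun k => Nat.le_add_left 1 (f k), ?_, ?_, ?_, ?_⟩
  · exact fun a b h => Nat.add_lt_add_right (hfmono h) 1
  · rw [← ContinuousLinearMap.mul_def]; exact hEE
  · exact cp_limit P E hPcp hb f htend
  · exact hnorm0
  · intro m F hm hm1 hFF hFt
    have hFlam : F ∈ lam P := by
      refine lam_of fun ε hε N' => ?_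
      obtain ⟨K, hK⟩ := Metric.tendsto_atTop.1 hFt ε hε
      set k := max K (N' + 1) with hk
      have hKk := hK k (le_max_left _ _)
      have hmk : N' + 1 ≤ m k := le_trans (le_max_right K (N' + 1)) hm.le_apply
      refine ⟨m k - 1, by omega, ?_⟩
      rw [show m k - 1 + 1 = m k by omega]
      rw [Real.dist_eq, sub_zero, abs_of_nonneg (norm_nonneg _)] at hKk
      exact hKk
    have hFF' : F * F = F := by rw [ContinuousLinearMap.mul_def]; exact hFF
    exact lam_unique_idem hb hElam hEE hFlam hFF'
end
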